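/- arXiv:2511.17034 — 2 statements merged into one kernel-verified Lean document; each statement's English description precedes it below -/
import Mathlib

section
/- Let n and k be positive integers and K a nonzero integer, and work in the Laurent polynomial ring ℤ[u^{±1}, v^{±1}, x_1^{±1},…,x_n^{±1}]. Then: (a) 2 · Σ_{y∈ℤ^k} det_{1≤i,j≤k}( u^{y_i} v^{K y_i^2 − (2j−1) y_i} ( ė_{n−i+j−K y_i}(x) + ė_{n+i+j−K y_i−1}(x) ) ) = Σ_{y∈ℤ^k} det_{1≤i,j≤k}( u^{y_i} v^{K y_i^2 − (2j−1) y_i} ( ë_{n−i+j−K y_i+1}(x) + ë_{n+i+j−K y_i−1}(x) ) ); and (b) Σ_{y∈ℤ^k} det_{1≤i,j≤k}( u^{y_i} v^{K y_i^2 − 2j y_i} ( ė_{n−i+j−K y_i}(x) − ė_{n+i+j−K y_i}(x) ) ) = Σ_{y∈ℤ^k} det_{1≤i,j≤k}( u^{y_i} v^{K y_i^2 − 2j y_i} ( ë_{n−i+j−K y_i+1}(x) − ë_{n+i+j−K y_i}(x) ) ). In all four sums only finitely many y ∈ ℤ^k give a nonzero determinant (since ė_m(x) = 0 and ë_m(x)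 = 0 unless 0 ≤ m ≤ 2n+1 and K ≠ 0), so all sums are finite. (These are the identities of the paper with t^{1/2} replaced by v and t = v^2.) -/
open Finset

noncomputable def esymI {F : Type*} [CommRing F] (s : Multiset F) (r : ℤ) : F :=
  if r < 0 then 0 else ((Multiset.powersetCard r.toNat s).map Multiset.prod).sum

noncomputable def eSym {F : Type*} [CommRing F] {n : ℕ} (x : Fin n → F) (r : ℤ) : F :=
  esymI (Finset.univ.val.map x) r

noncomputable def eDot {F : Type*} [Field F] {n : ℕ} (x : Fin n → F) (r : ℤ) : F :=
  esymI (Finset.univ.val.map x + Finset.univ.val.map fun i => (x i)⁻¹) r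

noncomputable def eDDot {F : Type*} [Field F] {n : ℕ} (x : Fin n → F) (r : ℤ) : F :=
  esymI (Finset.univ.val.map x + Finset.univ.val.map (fun i => (x i)⁻¹) + {1}) r

def multPart (n : ℕ) (lam : ℕ → ℕ) (i : ℕ) : ℕ :=
  ((Finset.range n).filter fun j => lam j = i).card

noncomputable def vHL {F : Type*} [Field F] (n : ℕ) (t : F) (lam : ℕ → ℕ) : F :=
  ∏ i ∈ (Finset.range n).image lam,
    ∏ j ∈ Finset.range (multPart n lam i), (1 - t ^ (j + 1)) / (1 - t)

open scoped Classical in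
noncomputable def HLP {F : Type*} [Field F] (n : ℕ) (x : Fin n → F) (t : F) (lam : ℕ → ℕ) : F :=
  if ∀ i, n ≤ i → lam i = 0 then
    (vHL n t lam)⁻¹ *
      ∑ w : Equiv.Perm (Fin n),
        (∏ i : Fin n, x (w i) ^ lam i.val) *
          ∏ p ∈ Finset.univ.filter fun p : Fin n × Fin n => p.1 < p.2,
            (x (w p.1) - t * x (w p.2)) / (x (w p.1) - x (w p.2))
  else 0

def pad {n B : ℕ} (f : Fin n → Fin B) : ℕ → ℕ :=
  fun i => if h : i < n then (f ⟨i, h⟩ : ℕ) else 0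

def zchoose2 (y : ℤ) : ℤ := y * (y - 1) / 2

abbrev FQ (σ : Type*) : Type _ := FractionRing (MvPolynomial σ ℚ)

noncomputable def XX {σ : Type*} (s : σ) : FQ σ :=
  algebraMap (MvPolynomial σ ℚ) (FractionRing (MvPolynomial σ ℚ)) (MvPolynomial.X s)

noncomputable def qPoch (a p : ℂ) : ℂ := ∏' j : ℕ, (1 - a * p ^ j)

noncomputable def theta (a p : ℂ) : ℂ := qPoch a p * qPoch (p / a) p

def gbinom {F : Type*} [CommRing F] (t : F) : ℕ → ℕ → F
  | _, 0 => 1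
  | 0, _ + 1 => 0
  | m + 1, r + 1 => gbinom t m (r + 1) + t ^ (m - r) * gbinom t m r

noncomputable def gbinomZ {F : Type*} [CommRing F] (t : F) (m : ℕ) (r : ℤ) : F :=
  if r < 0 then 0 else gbinom t m r.toNat

def lodd {n B : ℕ} (f : Fin n → Fin B) : ℕ :=
  (Finset.univ.filter fun i : Fin n => Odd (f i : ℕ)).card

/-! Since `ë_r = ė_r + ė_{r-1}`, row `i` of each `ë`-matrix is the sum of rows `i` and `i - 1`
of the corresponding `ė`-matrix, once the `ė`-row formula is extended to `i = 0`. Every row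
depends on a single summation variable `y_i`, so by multilinearity the sum over `y` of the
determinants is the determinant of the row-wise sums, and the row relation becomes left
multiplication by a lower bidiagonal matrix with unit subdiagonal. In (a) the extended row `0`
equals row `1`, so the diagonal is `(2, 1, …, 1)`; in (b) it vanishes and the diagonal is
`(1, …, 1)`. The sums are finite because `ė_r = 0` outside `0 ≤ r ≤ 2n` and `K ≠ 0`. -/

section ElementarySymmetric

variable {R : Type*} [CommRing R]

lemma esymI_of_neg (s : Multiset R) {r : ℤ} (hr : r < 0) : esymI s r = 0 := by
  simp [esymI, hr]

lemma esymI_of_card_lt (s : Multiset R) {r : ℤ} (hr : (Multiset.card s : ℤ) < r) :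
    esymI s r = 0 := by
  rw [esymI, if_neg (by omega), Multiset.powersetCard_eq_empty _ (by omega)]
  simp

lemma esymI_zero (s : Multiset R) : esymI s 0 = 1 := by
  simp [esymI]

lemma esymI_cons (a : R) (s : Multiset R) (r : ℤ) :
    esymI (a ::ₘ s) r = esymI s r + a * esymI s (r - 1) := by
  rcases lt_trichotomy r 0 with hr | rfl | hr
  · simp [esymI_of_neg _ hr, esymI_of_neg _ (show r - 1 < 0 by omega)]
  · simp [esymI_zero, esymI_of_neg s (show (-1 : ℤ) < 0 by norm_num)]
  · rw [esymI, esymI, esymI, if_neg (by omega), if_neg (by omega), if_neg (by omega),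
      show r.toNat = (r - 1).toNat + 1 by omega, Multiset.powersetCard_cons]
    simp [Multiset.sum_map_mul_left]

end ElementarySymmetric

section LaurentElementarySymmetric

variable {F : Type*} [Field F] {n : ℕ}

lemma eDDot_eq_eDot_add_eDot_sub_one (x : Fin n → F) (r : ℤ) :
    eDDot x r = eDot x r + eDot x (r - 1) := by
  rw [eDDot, eDot, eDot, add_comm _ {1}, Multiset.singleton_add, esymI_cons, one_mul]

lemma eDot_eq_zero (x : Fin n → F) {r : ℤ} (hr : r < 0 ∨ 2 * n < r) : eDot x r = 0 := by
  rcases hr with hr | hr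
  · exact esymI_of_neg _ hr
  · refine esymI_of_card_lt _ ?_
    simpa [two_mul] using hr

end LaurentElementarySymmetric

section Determinants

variable {R : Type*} [CommRing R]

theorem finsum_det_eq_det_sum {m α : Type*} [Fintype m] [DecidableEq m]
    (f : m → α → m → R) (A : Finset α) (hf : ∀ i a, a ∉ A → f i a = 0) :
    ∑ᶠ y : m → α, (Matrix.of fun i j => f i (y i) j).det =
      (Matrix.of fun i j => ∑ a ∈ A, f i a j).det := by
  have hsupp : (Function.support fun y : m → α => (Matrix.of fun i j => f i (y i) j).det) ⊆
      ↑(Fintype.piFinset fun _ : m => A) := by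
    intro y hy
    rw [Finset.mem_coe, Fintype.mem_piFinset]
    intro i
    by_contra hi
    exact hy (Matrix.det_eq_zero_of_row_eq_zero i fun j => by simp [hf i (y i) hi])
  rw [finsum_eq_sum_of_support_subset _ hsupp]
  have hexpand :=
    (Matrix.detRowAlternating : (m → R) [⋀^m]→ₗ[R] R).toMultilinearMap.map_sum_finset f fun _ => A
  convert hexpand.symm using 2
  · rfl
  · change Matrix.det _ = Matrix.det _
    congr 1
    ext i j
    simp [Finset.sum_apply]

def lowerShift (R : Type*) [Zero R] [One R] (k : ℕ) : Matrix (Fin k) (Fin k) R :=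
  Matrix.of fun i i' => if (i' : ℕ) + 1 = i then 1 else 0

variable {k : ℕ}

lemma det_diagonal_add_lowerShift (d : Fin k → R) :
    (Matrix.diagonal d + lowerShift R k).det = ∏ i, d i := by
  rw [Matrix.det_of_isLowerTriangular]
  · simp [lowerShift]
  · intro i i' hii'
    have : (i : ℕ) < i' := hii'
    simp only [lowerShift, Matrix.add_apply, Matrix.diagonal_apply, Matrix.of_apply]
    rw [if_neg (by rw [Fin.ext_iff]; omega), if_neg (by omega), add_zero]

lemma lowerShift_mul_of {ν : Type*} (r : ℤ → ν → R) :
    lowerShift R k * Matrix.of (fun i : Fin k => r ((i : ℕ) + 1)) =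
      Matrix.of fun i : Fin k => if (i : ℕ) = 0 then 0 else r i := by
  ext ⟨i, hi⟩ j
  simp only [lowerShift, Matrix.mul_apply, Matrix.of_apply, ite_mul, one_mul, zero_mul]
  cases i with
  | zero => simp
  | succ m =>
    rw [Finset.sum_eq_single ⟨m, by omega⟩
      (fun b _ hb => if_neg fun h => hb (Fin.ext (Nat.add_right_cancel h))) (by simp)]
    simp

theorem det_of_add_pred_rows (hk : k ≠ 0) (r : ℤ → Fin k → R) (c : R)
    (h0 : r 0 = c • r 1) :
    (Matrix.of fun i : Fin k => r ((i : ℕ) + 1) + r i).det =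
      (1 + c) * (Matrix.of fun i : Fin k => r ((i : ℕ) + 1)).det := by
  let d : Fin k → R := fun i => if i = ⟨0, Nat.pos_of_ne_zero hk⟩ then 1 + c else 1
  have hrows : Matrix.of (fun i : Fin k => r ((i : ℕ) + 1) + r i) =
      (Matrix.diagonal d + lowerShift R k) * Matrix.of (fun i : Fin k => r ((i : ℕ) + 1)) := by
    rw [add_mul, lowerShift_mul_of]
    ext i j
    rw [Matrix.add_apply, Matrix.diagonal_mul]
    by_cases hi : (i : ℕ) = 0
    · simp [d, hi, Fin.ext_iff, h0, add_mul]
    · simp [d, hi, Fin.ext_iff]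
  rw [hrows, Matrix.det_mul, det_diagonal_add_lowerShift, Finset.prod_ite_eq']
  simp

theorem finsum_det_of_add_pred_rows {α : Type*} (hk : k ≠ 0)
    (ρ : ℤ → α → Fin k → R) (A : Finset α) (c : R)
    (hA : ∀ I : ℤ, 0 ≤ I → I ≤ k → ∀ a ∉ A, ρ I a = 0) (h0 : ∀ a, ρ 0 a = c • ρ 1 a) :
    ∑ᶠ y : Fin k → α,
        (Matrix.of fun i j : Fin k => ρ ((i : ℕ) + 1) (y i) j + ρ i (y i) j).det =
      (1 + c) * ∑ᶠ y : Fin k → α,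
        (Matrix.of fun i j : Fin k => ρ ((i : ℕ) + 1) (y i) j).det := by
  have hA' : ∀ (i : Fin k) a, a ∉ A → ρ ((i : ℕ) + 1) a = 0 := fun i a ha =>
    hA _ (by omega) (by omega) a ha
  rw [finsum_det_eq_det_sum _ A hA',
    finsum_det_eq_det_sum (fun (i : Fin k) a j => ρ ((i : ℕ) + 1) a j + ρ i a j) A
      fun i a ha => funext fun j => by simp [hA' i a ha, hA i (by omega) (by omega) a ha]]
  simp only [Finset.sum_add_distrib]
  exact det_of_add_pred_rows hk (fun I j => ∑ a ∈ A, ρ I a j) c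
    (funext fun j => by simp [h0, Finset.mul_sum])

end Determinants

lemma lt_abs_mul_of_notMem_Icc {K t B : ℤ} (hK : K ≠ 0) (ht : t ∉ Finset.Icc (-B) B) :
    B < |K * t| := by
  rw [Finset.mem_Icc, not_and_or, not_le, not_le] at ht
  calc B < |t| := lt_abs.2 (by omega)
    _ ≤ |K| * |t| := le_mul_of_one_le_left (abs_nonneg t) (Int.one_le_abs hK)
    _ = |K * t| := (abs_mul K t).symm

section Identities

variable {F : Type*} [Field F] {n k : ℕ} (x : Fin n → F) {K : ℤ}

theorem two_mul_finsum_det_eDot_add_eq (hk : k ≠ 0) (hK : K ≠ 0) (W : ℤ → Fin k → F) :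
    2 * ∑ᶠ y : Fin k → ℤ, (Matrix.of fun i j : Fin k => W (y i) j *
        (eDot x ((n : ℤ) - (((i : ℕ) : ℤ) + 1) + (((j : ℕ) : ℤ) + 1) - K * y i) +
          eDot x
            ((n : ℤ) + (((i : ℕ) : ℤ) + 1) + (((j : ℕ) : ℤ) + 1) - K * y i - 1))).det =
      ∑ᶠ y : Fin k → ℤ, (Matrix.of fun i j : Fin k => W (y i) j *
        (eDDot x ((n : ℤ) - (((i : ℕ) : ℤ) + 1) + (((j : ℕ) : ℤ) + 1) - K * y i + 1) +
          eDDot x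
            ((n : ℤ) + (((i : ℕ) : ℤ) + 1) + (((j : ℕ) : ℤ) + 1) - K * y i - 1))).det := by
  let ρ : ℤ → ℤ → Fin k → F := fun I t j => W t j *
    (eDot x (n - I + (((j : ℕ) : ℤ) + 1) - K * t) +
      eDot x (n + I + (((j : ℕ) : ℤ) + 1) - K * t - 1))
  have key := finsum_det_of_add_pred_rows hk ρ (Finset.Icc (-(n + 2 * k)) (n + 2 * k)) 1 ?_ ?_
  · rw [one_add_one_eq_two] at key
    refine key.symm.trans (finsum_congr fun y => congrArg Matrix.det (Matrix.ext fun i j => ?_))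
    simp only [ρ, Matrix.of_apply, eDDot_eq_eDot_add_eDot_sub_one]
    ring_nf
  · intro I hI0 hIk t ht
    have hKt := lt_abs.1 (lt_abs_mul_of_notMem_Icc hK ht)
    funext j
    have hj := j.isLt
    simp only [ρ, Pi.zero_apply]
    rw [eDot_eq_zero x (by omega), eDot_eq_zero x (by omega), add_zero, mul_zero]
  · intro t
    funext j
    simp only [ρ, one_smul]
    ring_nf

theorem finsum_det_eDot_sub_eq (hk : k ≠ 0) (hK : K ≠ 0) (W : ℤ → Fin k → F) :
    ∑ᶠ y : Fin k → ℤ, (Matrix.of fun i j : Fin k => W (y i) j *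
        (eDot x ((n : ℤ) - (((i : ℕ) : ℤ) + 1) + (((j : ℕ) : ℤ) + 1) - K * y i) -
          eDot x
            ((n : ℤ) + (((i : ℕ) : ℤ) + 1) + (((j : ℕ) : ℤ) + 1) - K * y i))).det =
      ∑ᶠ y : Fin k → ℤ, (Matrix.of fun i j : Fin k => W (y i) j *
        (eDDot x ((n : ℤ) - (((i : ℕ) : ℤ) + 1) + (((j : ℕ) : ℤ) + 1) - K * y i + 1) -
          eDDot x
            ((n : ℤ) + (((i : ℕ) : ℤ) + 1) + (((j : ℕ) : ℤ) + 1) - K * y i))).det := by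
  let ρ : ℤ → ℤ → Fin k → F := fun I t j => W t j *
    (eDot x (n - I + (((j : ℕ) : ℤ) + 1) - K * t) -
      eDot x (n + I + (((j : ℕ) : ℤ) + 1) - K * t))
  have key := finsum_det_of_add_pred_rows hk ρ (Finset.Icc (-(n + 2 * k)) (n + 2 * k)) 0 ?_ ?_
  · rw [add_zero, one_mul] at key
    refine key.symm.trans (finsum_congr fun y => congrArg Matrix.det (Matrix.ext fun i j => ?_))
    simp only [ρ, Matrix.of_apply, eDDot_eq_eDot_add_eDot_sub_one]
    ring_nf
  · intro I hI0 hIk t ht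
    have hKt := lt_abs.1 (lt_abs_mul_of_notMem_Icc hK ht)
    funext j
    have hj := j.isLt
    simp only [ρ, Pi.zero_apply]
    rw [eDot_eq_zero x (by omega), eDot_eq_zero x (by omega), sub_zero, mul_zero]
  · intro t
    funext j
    simp [ρ]

end Identities

/-- Stated in `ℚ(u, v, x₁, …, xₙ)`, into which `ℤ[u^{±1}, v^{±1}, x^{±1}]` embeds, with
`u = XX (Sum.inl 0)`, `v = XX (Sum.inl 1)` and `xₗ = XX (Sum.inr l)`. -/
theorem determinant_identities_edot_eddot_general (n k : ℕ) (hk : 0 < k)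
    (K : ℤ) (hK : K ≠ 0) :
    (2 * ∑ᶠ y : Fin k → ℤ,
        Matrix.det (Matrix.of fun i j : Fin k =>
          XX (Sum.inl 0 : Fin 2 ⊕ Fin n) ^ y i *
            XX (Sum.inl 1 : Fin 2 ⊕ Fin n) ^
              (K * (y i) ^ 2 - (2 * (((j : ℕ) : ℤ) + 1) - 1) * y i) *
            (eDot (fun l : Fin n => XX (Sum.inr l))
                ((n : ℤ) - (((i : ℕ) : ℤ) + 1) + (((j : ℕ) : ℤ) + 1) - K * y i) +
              eDot (fun l : Fin n => XX (Sum.inr l))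
                ((n : ℤ) + (((i : ℕ) : ℤ) + 1) + (((j : ℕ) : ℤ) + 1) - K * y i - 1))) =
      ∑ᶠ y : Fin k → ℤ,
        Matrix.det (Matrix.of fun i j : Fin k =>
          XX (Sum.inl 0 : Fin 2 ⊕ Fin n) ^ y i *
            XX (Sum.inl 1 : Fin 2 ⊕ Fin n) ^
              (K * (y i) ^ 2 - (2 * (((j : ℕ) : ℤ) + 1) - 1) * y i) *
            (eDDot (fun l : Fin n => XX (Sum.inr l))
                ((n : ℤ) - (((i : ℕ) : ℤ) + 1) + (((j : ℕ) : ℤ) + 1) - K * y i + 1) +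
              eDDot (fun l : Fin n => XX (Sum.inr l))
                ((n : ℤ) + (((i : ℕ) : ℤ) + 1) + (((j : ℕ) : ℤ) + 1) - K * y i - 1)))) ∧
    (∑ᶠ y : Fin k → ℤ,
        Matrix.det (Matrix.of fun i j : Fin k =>
          XX (Sum.inl 0 : Fin 2 ⊕ Fin n) ^ y i *
            XX (Sum.inl 1 : Fin 2 ⊕ Fin n) ^
              (K * (y i) ^ 2 - 2 * (((j : ℕ) : ℤ) + 1) * y i) *
            (eDot (fun l : Fin n => XX (Sum.inr l))
                ((n : ℤ) - (((i : ℕ) : ℤ) + 1) + (((j : ℕ) : ℤ) + 1) - K * y i) -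
              eDot (fun l : Fin n => XX (Sum.inr l))
                ((n : ℤ) + (((i : ℕ) : ℤ) + 1) + (((j : ℕ) : ℤ) + 1) - K * y i)) ) =
      ∑ᶠ y : Fin k → ℤ,
        Matrix.det (Matrix.of fun i j : Fin k =>
          XX (Sum.inl 0 : Fin 2 ⊕ Fin n) ^ y i *
            XX (Sum.inl 1 : Fin 2 ⊕ Fin n) ^
              (K * (y i) ^ 2 - 2 * (((j : ℕ) : ℤ) + 1) * y i) *
            (eDDot (fun l : Fin n => XX (Sum.inr l))
                ((n : ℤ) - (((i : ℕ) : ℤ) + 1) + (((j : ℕ) : ℤ) + 1) - K * y i + 1) -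
              eDDot (fun l : Fin n => XX (Sum.inr l))
                ((n : ℤ) + (((i : ℕ) : ℤ) + 1) + (((j : ℕ) : ℤ) + 1) - K * y i)))) := by
  set u := XX (Sum.inl 0 : Fin 2 ⊕ Fin n)
  set v := XX (Sum.inl 1 : Fin 2 ⊕ Fin n)
  exact ⟨two_mul_finsum_det_eDot_add_eq _ hk.ne' hK
      fun t (j : Fin k) => u ^ t * v ^ (K * t ^ 2 - (2 * (((j : ℕ) : ℤ) + 1) - 1) * t),
    finsum_det_eDot_sub_eq _ hk.ne' hK
      fun t (j : Fin k) => u ^ t * v ^ (K * t ^ 2 - 2 * (((j : ℕ) : ℤ) + 1) * t)⟩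

/-- the two determinant identities relating `ė` and `ë`
(with `t^{1/2}` replaced by `v`, `t = v²`), as identities in `ℚ(u,v,x₁,…,xₙ)`
(in which the Laurent polynomial ring `ℤ[u^{±1},v^{±1},x^{±1}]` embeds). -/
theorem determinant_identities_edot_eddot (n k : ℕ) (hn : 0 < n) (hk : 0 < k)
    (K : ℤ) (hK : K ≠ 0) :
    (2 * ∑ᶠ y : Fin k → ℤ,
        Matrix.det (Matrix.of fun i j : Fin k =>
          XX (Sum.inl 0 : Fin 2 ⊕ Fin n) ^ y i *
            XX (Sum.inl 1 : Fin 2 ⊕ Fin n) ^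
              (K * (y i) ^ 2 - (2 * (((j : ℕ) : ℤ) + 1) - 1) * y i) *
            (eDot (fun l : Fin n => XX (Sum.inr l))
                ((n : ℤ) - (((i : ℕ) : ℤ) + 1) + (((j : ℕ) : ℤ) + 1) - K * y i) +
              eDot (fun l : Fin n => XX (Sum.inr l))
                ((n : ℤ) + (((i : ℕ) : ℤ) + 1) + (((j : ℕ) : ℤ) + 1) - K * y i - 1))) =
      ∑ᶠ y : Fin k → ℤ,
        Matrix.det (Matrix.of fun i j : Fin k =>
          XX (Sum.inl 0 : Fin 2 ⊕ Fin n) ^ y i *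
            XX (Sum.inl 1 : Fin 2 ⊕ Fin n) ^
              (K * (y i) ^ 2 - (2 * (((j : ℕ) : ℤ) + 1) - 1) * y i) *
            (eDDot (fun l : Fin n => XX (Sum.inr l))
                ((n : ℤ) - (((i : ℕ) : ℤ) + 1) + (((j : ℕ) : ℤ) + 1) - K * y i + 1) +
              eDDot (fun l : Fin n => XX (Sum.inr l))
                ((n : ℤ) + (((i : ℕ) : ℤ) + 1) + (((j : ℕ) : ℤ) + 1) - K * y i - 1)))) ∧
    (∑ᶠ y : Fin k → ℤ,
        Matrix.det (Matrix.of fun i j : Fin k =>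
          XX (Sum.inl 0 : Fin 2 ⊕ Fin n) ^ y i *
            XX (Sum.inl 1 : Fin 2 ⊕ Fin n) ^
              (K * (y i) ^ 2 - 2 * (((j : ℕ) : ℤ) + 1) * y i) *
            (eDot (fun l : Fin n => XX (Sum.inr l))
                ((n : ℤ) - (((i : ℕ) : ℤ) + 1) + (((j : ℕ) : ℤ) + 1) - K * y i) -
              eDot (fun l : Fin n => XX (Sum.inr l))
                ((n : ℤ) + (((i : ℕ) : ℤ) + 1) + (((j : ℕ) : ℤ) + 1) - K * y i)) ) =
      ∑ᶠ y : Fin k → ℤ,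
        Matrix.det (Matrix.of fun i j : Fin k =>
          XX (Sum.inl 0 : Fin 2 ⊕ Fin n) ^ y i *
            XX (Sum.inl 1 : Fin 2 ⊕ Fin n) ^
              (K * (y i) ^ 2 - 2 * (((j : ℕ) : ℤ) + 1) * y i) *
            (eDDot (fun l : Fin n => XX (Sum.inr l))
                ((n : ℤ) - (((i : ℕ) : ℤ) + 1) + (((j : ℕ) : ℤ) + 1) - K * y i + 1) -
              eDDot (fun l : Fin n => XX (Sum.inr l))
                ((n : ℤ) + (((i : ℕ) : ℤ) + 1) + (((j : ℕ) : ℤ) + 1) - K * y i)))) :=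
  determinant_identities_edot_eddot_general n k hk K hK
end

section
/- Let R be a commutative ring, k a positive integer, E : ℤ → R any function, z ∈ ℤ^k, w a permutation of {1,…,k}, and I a nonempty subset of {2,…,k}. For a permutation σ of {1,…,k} and integers i, j with 1 ≤ i ≤ k, define F_{i,j}(σ) := E(z_{w(σ(i))} + j − σ(i)) + E(z_{w(σ(i))} − j − σ(i) + 1) and F̃_{i,j}(σ) := E(z_{w(σ(i))} + j − σ(i)) − E(z_{w(σ(i))} − j − σ(i)). Then Σ_{σ ∈ S_k} sgn(σ) · ( ∏_{i ∈ I} F_{i,i−1}(σ) ) · ( ∏_{i ∈ {1,…,k}∖I} F_{i,i}(σ) ) = 0, and likewise Σ_{σ ∈ S_k} sgn(σ) · ( ∏_{i ∈ I} F̃_{i,i−1}(σ) ) · ( ∏_{i ∈ {1,…,k}∖I} F̃_{i,i}(σ) ) = 0. -/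
/-!
Writing `F_{i,j}(σ) = u (σ i) j`, both sums are Leibniz expansions of `det M`, where
`M c i = u c i` for `i ∈ I` and `M c i = u c (i + 1)` otherwise (indices from `0`). If `i₀` is the least element of `I`, then
`i₀ - 1 ∉ I`, so the columns `i₀ - 1` and `i₀` of `M` coincide and `det M = 0`.
-/

open Finset

open Equiv

theorem Matrix.sum_sign_mul_prod_eq_zero_of_not_injective {R n α : Type*} [CommRing R]
    [Fintype n] [DecidableEq n] (u : n → α → R) {c : n → α} (hc : ¬ Function.Injective c) :
    ∑ σ : Perm n, ((Perm.sign σ : ℤ) : R) * ∏ i, u (σ i) (c i) = 0 := by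
  obtain ⟨i, j, hij, hne⟩ : ∃ i j, c i = c j ∧ i ≠ j := by
    simpa [Function.Injective] using hc
  calc _ = (Matrix.of fun r i => u r (c i)).det := (Matrix.det_apply' _).symm
    _ = 0 := Matrix.det_zero_of_column_eq hne fun r => by simp [hij]

theorem Fin.not_injective_ite_mem_natCast {k : ℕ} {I : Finset (Fin k)} (hI : I.Nonempty)
    (hI0 : ∀ i ∈ I, (i : ℕ) ≠ 0) :
    ¬ Function.Injective fun i : Fin k => if i ∈ I then ((i : ℕ) : ℤ) else ((i : ℕ) : ℤ) + 1 := by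
  set i₀ := I.min' hI
  have hi₀ : i₀ ∈ I := I.min'_mem hI
  have hpos : (i₀ : ℕ) ≠ 0 := hI0 i₀ hi₀
  obtain ⟨i₁, hi₁v⟩ : ∃ i₁ : Fin k, (i₁ : ℕ) = i₀ - 1 := ⟨⟨i₀ - 1, by omega⟩, rfl⟩
  have hi₁ : i₁ ∉ I := fun h => by
    have : (i₀ : ℕ) ≤ i₁ := I.min'_le i₁ h
    omega
  intro hinj
  have := Fin.val_eq_of_eq (@hinj i₀ i₁ (by simp only [hi₀, hi₁, if_true, if_false]; omega))
  omega

theorem sum_sign_mul_prod_mem_mul_prod_compl_eq_zero {R : Type*} [CommRing R] {k : ℕ}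
    (u : Fin k → ℤ → R) {I : Finset (Fin k)} (hI : I.Nonempty) (hI0 : ∀ i ∈ I, (i : ℕ) ≠ 0) :
    ∑ σ : Perm (Fin k), ((Perm.sign σ : ℤ) : R) *
      ((∏ i ∈ I, u (σ i) ((i : ℕ) : ℤ)) * ∏ i ∈ Iᶜ, u (σ i) (((i : ℕ) : ℤ) + 1)) = 0 := by
  rw [← Matrix.sum_sign_mul_prod_eq_zero_of_not_injective u
    (Fin.not_injective_ite_mem_natCast hI hI0)]
  refine Finset.sum_congr rfl fun σ _ => ?_
  rw [← Finset.prod_mul_prod_compl I]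
  congr 2 <;> refine Finset.prod_congr rfl fun i hi => ?_ <;> simp_all

-- `i : Fin k` stands for the one-based index `i + 1`: `I ⊆ {2,…,k}` becomes `(i : ℕ) ≠ 0`,
-- and `F_{i,i−1}`, `F_{i,i}` are taken at `j = i` and `j = i + 1`.
theorem alternating_sum_vanishing_general {R : Type*} [CommRing R] (k : ℕ)
    (E : ℤ → R) (z : Fin k → ℤ) (w : Equiv.Perm (Fin k)) (I : Finset (Fin k))
    (hI : I.Nonempty) (hI0 : ∀ i ∈ I, (i : ℕ) ≠ 0) :
    (∑ σ : Equiv.Perm (Fin k),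
        ((Equiv.Perm.sign σ : ℤ) : R) *
          ((∏ i ∈ I,
              (E (z (w (σ i)) + ((i : ℕ) : ℤ) - (((σ i : ℕ) : ℤ) + 1)) +
                E (z (w (σ i)) - ((i : ℕ) : ℤ) - (((σ i : ℕ) : ℤ) + 1) + 1))) *
            ∏ i ∈ Iᶜ,
              (E (z (w (σ i)) + (((i : ℕ) : ℤ) + 1) - (((σ i : ℕ) : ℤ) + 1)) +
                E (z (w (σ i)) - (((i : ℕ) : ℤ) + 1) - (((σ i : ℕ) : ℤ) + 1) + 1))) = 0) ∧
    (∑ σ : Equiv.Perm (Fin k),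
        ((Equiv.Perm.sign σ : ℤ) : R) *
          ((∏ i ∈ I,
              (E (z (w (σ i)) + ((i : ℕ) : ℤ) - (((σ i : ℕ) : ℤ) + 1)) -
                E (z (w (σ i)) - ((i : ℕ) : ℤ) - (((σ i : ℕ) : ℤ) + 1)))) *
            ∏ i ∈ Iᶜ,
              (E (z (w (σ i)) + (((i : ℕ) : ℤ) + 1) - (((σ i : ℕ) : ℤ) + 1)) -
                E (z (w (σ i)) - (((i : ℕ) : ℤ) + 1) - (((σ i : ℕ) : ℤ) + 1)))) = 0) := by
  exact ⟨sum_sign_mul_prod_mem_mul_prod_compl_eq_zero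
      (fun c j => E (z (w c) + j - (((c : ℕ) : ℤ) + 1)) +
        E (z (w c) - j - (((c : ℕ) : ℤ) + 1) + 1)) hI hI0,
    sum_sign_mul_prod_mem_mul_prod_compl_eq_zero
      (fun c j => E (z (w c) + j - (((c : ℕ) : ℤ) + 1)) -
        E (z (w c) - j - (((c : ℕ) : ℤ) + 1))) hI hI0⟩

/-- the key alternating-sum vanishing result behind the determinant
identities. Indices are one-based in the mathematical statement; here `i : Fin k`
corresponds to the one-based index `i+1`, so `I ⊆ {2,…,k}` becomes `(i : ℕ) ≠ 0`,
`F_{i,i−1}` uses `j = (i:ℤ)` and `F_{i,i}` uses `j = (i:ℤ)+1`. -/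
theorem alternating_sum_vanishing {R : Type*} [CommRing R] (k : ℕ) (hk : 0 < k)
    (E : ℤ → R) (z : Fin k → ℤ) (w : Equiv.Perm (Fin k)) (I : Finset (Fin k))
    (hI : I.Nonempty) (hI0 : ∀ i ∈ I, (i : ℕ) ≠ 0) :
    (∑ σ : Equiv.Perm (Fin k),
        ((Equiv.Perm.sign σ : ℤ) : R) *
          ((∏ i ∈ I,
              (E (z (w (σ i)) + ((i : ℕ) : ℤ) - (((σ i : ℕ) : ℤ) + 1)) +
                E (z (w (σ i)) - ((i : ℕ) : ℤ) - (((σ i : ℕ) : ℤ) + 1) + 1))) *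
            ∏ i ∈ Iᶜ,
              (E (z (w (σ i)) + (((i : ℕ) : ℤ) + 1) - (((σ i : ℕ) : ℤ) + 1)) +
                E (z (w (σ i)) - (((i : ℕ) : ℤ) + 1) - (((σ i : ℕ) : ℤ) + 1) + 1))) = 0) ∧
    (∑ σ : Equiv.Perm (Fin k),
        ((Equiv.Perm.sign σ : ℤ) : R) *
          ((∏ i ∈ I,
              (E (z (w (σ i)) + ((i : ℕ) : ℤ) - (((σ i : ℕ) : ℤ) + 1)) -
                E (z (w (σ i)) - ((i : ℕ) : ℤ) - (((σ i : ℕ) : ℤ) + 1)))) *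
            ∏ i ∈ Iᶜ,
              (E (z (w (σ i)) + (((i : ℕ) : ℤ) + 1) - (((σ i : ℕ) : ℤ) + 1)) -
                E (z (w (σ i)) - (((i : ℕ) : ℤ) + 1) - (((σ i : ℕ) : ℤ) + 1)))) = 0) :=
  alternating_sum_vanishing_general k E z w I hI hI0
end
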